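/- (Monotonicity of stabilizability) Fix an instruction field I. If η ≤ ξ pointwise (in the order of ℕ_𝔰 where 0 < 𝔰 < 1 < 2 < ⋯) and ξ is I-stabilizable (i.e. m_{ξ;I}(x) < ∞ for every x ∈ ℤ^d), then η is I-stabilizable. -/
import Mathlib


open scoped ENNReal NNReal
open MeasureTheory

namespace ARW

/-- A site of the lattice `ℤ^d`. -/
abbrev Site (d : ℕ) := Fin d → ℤ

/-- The set `ℕ_𝔰 = ℕ ∪ {𝔰}` of possible values at a site. -/
inductive NS where
  | nat : ℕ → NS
  | s : NS
deriving DecidableEq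

/-- Rank function realizing the total order `0 < 𝔰 < 1 < 2 < ⋯`
(`𝔰` is placed at `1/2`). -/
def NS.val : NS → ℚ
  | .nat n => n
  | .s => 1/2

instance : LE NS := ⟨fun a b => a.val ≤ b.val⟩
instance : LT NS := ⟨fun a b => a.val < b.val⟩

/-- Remove one particle: `n − 1`, with `𝔰 − 1 = 0`. -/
def NS.dec : NS → NS
  | .nat 0 => .nat 0
  | .nat (n+1) => .nat n
  | .s => .nat 0

/-- Add one particle: `n + 1`, with `𝔰 + 1 = 2`. -/
def NS.inc : NS → NS
  | .nat n => .nat (n+1)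
  | .s => .nat 2

/-- Multiplication by `𝔰`: `n·𝔰 = n` for `n ≥ 2`, `1·𝔰 = 𝔰`, `𝔰·𝔰 = 𝔰`. -/
def NS.mulS : NS → NS
  | .nat 0 => .nat 0
  | .nat 1 => .s
  | .nat (n+2) => .nat (n+2)
  | .s => .s

/-- A configuration of the ARW. -/
abbrev Config (d : ℕ) := Site d → NS

/-- An odometer. -/
abbrev Odom (d : ℕ) := Site d → ℕ

/-- An instruction: either a sleep instruction `τ_{x𝔰}`, or a move instruction
`τ_{xy}` recorded through the displacement `z = y − x ≠ 0`. -/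
inductive Instr (d : ℕ) where
  | sleep : Instr d
  | move : (z : Site d) → z ≠ 0 → Instr d

/-- Applying an instruction at site `x` to a configuration: `τ_{x𝔰}` replaces `η(x)` by
`η(x)·𝔰`; `τ_{xy}` (with `y = x + z`) decreases `η(x)` by one and increases `η(y)` by one. -/
def applyInstr {d : ℕ} (x : Site d) (ι : Instr d) (η : Config d) : Config d :=
  match ι with
  | .sleep => Function.update η x (η x).mulS
  | .move z _ => fun w =>
      if w = x then (η x).dec
      else if w = x + z then (η (x + z)).inc
      else η w

/-- A field of instructions `(τ^{x,j})_{x ∈ ℤ^d, j ∈ ℕ}`. -/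
abbrev InstrField (d : ℕ) := Site d → ℕ → Instr d

/-- Toppling site `x`: `Φ_x(η,h) = (τ^{x,h(x)+1} η, h + δ_x)`. -/
def topple {d : ℕ} (I : InstrField d) (x : Site d) (s : Config d × Odom d) :
    Config d × Odom d :=
  (applyInstr x (I x (s.2 x + 1)) s.1, Function.update s.2 x (s.2 x + 1))

/-- `Φ_α` for a finite sequence `α = (x_1, …, x_k)` of sites (`x_1` acts first). -/
def toppleSeq {d : ℕ} (I : InstrField d) :
    List (Site d) → Config d × Odom d → Config d × Odom d
  | [], s => s
  | x :: α, s => toppleSeq I α (topple I x s)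

/-- Site `x` is unstable for `η` if `η(x) ≥ 1`. -/
def Unstable {d : ℕ} (η : Config d) (x : Site d) : Prop := NS.nat 1 ≤ η x

/-- Toppling `x` is acceptable for `η` if `η(x) ≠ 0`. -/
def AcceptableAt {d : ℕ} (η : Config d) (x : Site d) : Prop := η x ≠ NS.nat 0

/-- `α` is a legal sequence of topplings for `(η,h)`: each successive toppling is legal. -/
inductive LegalSeq {d : ℕ} (I : InstrField d) : List (Site d) → Config d × Odom d → Prop
  | nil (s : Config d × Odom d) : LegalSeq I [] s
  | cons {x : Site d} {α : List (Site d)} {s : Config d × Odom d} :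
      Unstable s.1 x → LegalSeq I α (topple I x s) → LegalSeq I (x :: α) s

/-- `α` is an acceptable sequence of topplings for `(η,h)`. -/
inductive AcceptableSeq {d : ℕ} (I : InstrField d) : List (Site d) → Config d × Odom d → Prop
  | nil (s : Config d × Odom d) : AcceptableSeq I [] s
  | cons {x : Site d} {α : List (Site d)} {s : Config d × Odom d} :
      AcceptableAt s.1 x → AcceptableSeq I α (topple I x s) → AcceptableSeq I (x :: α) s

/-- `η` is stable in `V`: every `x ∈ V` is stable for `η`. -/
def StableIn {d : ℕ} (η : Config d) (V : Set (Site d)) : Prop :=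
  ∀ x ∈ V, ¬ Unstable η x

/-- `m_{V,η,h}(x) = sup { m_β(x) : β ⊆ V legal for (η,h) }`, as an element of `ℕ∞`. -/
noncomputable def mV {d : ℕ} (I : InstrField d) (V : Set (Site d)) (η : Config d) (h : Odom d)
    (x : Site d) : ℕ∞ :=
  ⨆ (β : List (Site d)) (_ : (∀ y ∈ β, y ∈ V) ∧ LegalSeq I β (η, h)), (β.count x : ℕ∞)

/-- `m_{η,h} = m_{ℤ^d,η,h}`. -/
noncomputable def mFull {d : ℕ} (I : InstrField d) (η : Config d) (h : Odom d) :
    Site d → ℕ∞ :=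
  mV I Set.univ η h

/-- The zero odometer. -/
def zeroOdom (d : ℕ) : Odom d := fun _ => 0

/-- `η` is `I`-stabilizable: `m_{η;I}(x) < ∞` for every `x`. -/
def Stabilizable {d : ℕ} (I : InstrField d) (η : Config d) : Prop :=
  ∀ x : Site d, mFull I η (zeroOdom d) x < ⊤

/-- `η` is `I`-explosive: `m_{η;I}(x) = ∞` for every `x`. -/
def Explosive {d : ℕ} (I : InstrField d) (η : Config d) : Prop :=
  ∀ x : Site d, mFull I η (zeroOdom d) x = ⊤

lemma NS.le_def {a b : NS} : a ≤ b ↔ a.val ≤ b.val := Iff.rfl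

lemma NS.nat_le_nat {m n : ℕ} : NS.nat m ≤ NS.nat n ↔ m ≤ n := by
  simp [NS.le_def, NS.val]

lemma NS.nat_le_s {m : ℕ} : NS.nat m ≤ NS.s ↔ m = 0 := by
  constructor
  · intro h
    have h' : (m : ℚ) ≤ 1/2 := h
    have : (m : ℚ) < 1 := lt_of_le_of_lt h' (by norm_num)
    exact_mod_cast Nat.lt_one_iff.mp (by exact_mod_cast this)
  · rintro rfl
    show ((0:ℕ) : ℚ) ≤ 1/2
    norm_num

lemma NS.s_le_nat {n : ℕ} : NS.s ≤ NS.nat n ↔ 1 ≤ n := by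
  constructor
  · intro h
    have h' : (1/2 : ℚ) ≤ n := h
    by_contra hn
    push_neg at hn
    interval_cases n
    norm_num at h'
  · intro h
    show (1/2 : ℚ) ≤ n
    have : (1 : ℚ) ≤ n := by exact_mod_cast h
    linarith

lemma NS.zero_le (b : NS) : NS.nat 0 ≤ b := by
  cases b with
  | nat n => exact NS.nat_le_nat.mpr (Nat.zero_le n)
  | s => exact NS.nat_le_s.mpr rfl

lemma NS.s_le_s : NS.s ≤ NS.s := le_refl (1/2 : ℚ)

lemma NS.dec_mono {a b : NS} (h : a ≤ b) : a.dec ≤ b.dec := by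
  rcases a with m | _ <;> rcases b with n | _
  · rcases m with _ | m
    · exact NS.zero_le _
    · rcases n with _ | n
      · exact absurd (NS.nat_le_nat.mp h) (by omega)
      · exact NS.nat_le_nat.mpr (by have := NS.nat_le_nat.mp h; omega)
  · obtain rfl := NS.nat_le_s.mp h
    exact NS.zero_le _
  · exact NS.zero_le _
  · exact NS.zero_le _

lemma NS.inc_mono {a b : NS} (h : a ≤ b) : a.inc ≤ b.inc := by
  rcases a with m | _ <;> rcases b with n | _
  · exact NS.nat_le_nat.mpr (by have := NS.nat_le_nat.mp h; omega)
  · obtain rfl := NS.nat_le_s.mp h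
    exact NS.nat_le_nat.mpr (by omega)
  · have := NS.s_le_nat.mp h
    exact NS.nat_le_nat.mpr (by omega)
  · exact NS.nat_le_nat.mpr le_rfl

lemma NS.mulS_mono {a b : NS} (h : a ≤ b) : a.mulS ≤ b.mulS := by
  rcases a with m | _ <;> rcases b with n | _
  · have hmn := NS.nat_le_nat.mp h
    rcases m with _ | _ | m
    · exact NS.zero_le _
    · rcases n with _ | _ | n
      · omega
      · exact NS.s_le_s
      · exact NS.s_le_nat.mpr (by omega)
    · rcases n with _ | _ | n
      · omega
      · omega
      · exact NS.nat_le_nat.mpr hmn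
  · obtain rfl := NS.nat_le_s.mp h
    exact NS.zero_le _
  · have hn := NS.s_le_nat.mp h
    rcases n with _ | _ | n
    · omega
    · exact NS.s_le_s
    · exact NS.s_le_nat.mpr (by omega)
  · exact NS.s_le_s

lemma NS.le_trans' {a b c : NS} (h1 : a ≤ b) (h2 : b ≤ c) : a ≤ c :=
  NS.le_def.mpr (le_trans (NS.le_def.mp h1) (NS.le_def.mp h2))

lemma applyInstr_mono {d : ℕ} (x : Site d) (ι : Instr d) {η ξ : Config d}
    (h : ∀ w, η w ≤ ξ w) : ∀ w, applyInstr x ι η w ≤ applyInstr x ι ξ w := by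
  intro w
  cases ι with
  | sleep =>
      simp only [applyInstr, Function.update]
      by_cases hw : w = x <;> simp [hw]
      · exact NS.mulS_mono (h x)
      · exact h w
  | move z hz =>
      simp only [applyInstr]
      by_cases hw : w = x
      · simp only [hw, if_pos rfl]
        exact NS.dec_mono (h x)
      · rw [if_neg hw, if_neg hw]
        by_cases hw2 : w = x + z
        · rw [if_pos hw2, if_pos hw2]
          exact NS.inc_mono (h (x + z))
        · rw [if_neg hw2, if_neg hw2]
          exact h w

lemma legalSeq_mono {d : ℕ} (I : InstrField d) :
    ∀ (α : List (Site d)) (η ξ : Config d) (h : Odom d),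
      (∀ w, η w ≤ ξ w) → LegalSeq I α (η, h) → LegalSeq I α (ξ, h) := by
  intro α
  induction α with
  | nil => intro _ _ _ _ _; exact LegalSeq.nil _
  | cons x α ih =>
      intro η ξ h hle hL
      cases hL with
      | cons hU hrest =>
        refine LegalSeq.cons (NS.le_trans' hU (hle x)) ?_
        exact ih _ _ _ (applyInstr_mono x _ hle) hrest

/-- **Monotonicity of stabilizability**: if `η ≤ ξ` pointwise and `ξ` is `I`-stabilizable,
then `η` is `I`-stabilizable. -/
theorem stabilizable_mono {d : ℕ} (I : InstrField d) (η ξ : Config d)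
    (hle : ∀ x : Site d, η x ≤ ξ x) (hξ : Stabilizable I ξ) :
    Stabilizable I η := by
  intro x
  refine lt_of_le_of_lt ?_ (hξ x)
  unfold mFull mV
  refine iSup_le fun β => iSup_le fun hβ => ?_
  exact le_iSup_of_le β (le_iSup_of_le ⟨hβ.1, legalSeq_mono I β η ξ _ hle hβ.2⟩ le_rfl)

end ARW
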